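/- arXiv:1905.09026 — 3 statements merged into one kernel-verified Lean document; each statement's English description precedes it below -/
import Mathlib

section
/- Let D₁, D₂, D₃ : ℝ³ → ℝ³ be a frame with structure functions c_{jk}^i, let g₁, g₂, g₃ : ℝ³ → ℝ be smooth, let A, B : ℝ³ → ℝ be smooth with A > 0 and B > 0 everywhere, and let σ ∈ {−1, +1}. For a smooth function f write B^f for exp(f · log B). Define D̂_i = σ A B^{g_j+g_k} D_i for each cyclic permutation (i,j,k) of (1,2,3). Then D̂₁, D̂₂, D̂₃ is a frame, and its structure functions ĉ satisfy ĉ_{jk}^i = σ A B^{2 g_i} c_{jk}^i for every cyclic permutation (i,j,k) of (1,2,3). -/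
noncomputable section

/-- Points of `ℝ³`. -/
abbrev R3 : Type := Fin 3 → ℝ

/-- Lie bracket of vector fields on `ℝ³`:
`[X,Y](x) = (DY)_x(X(x)) − (DX)_x(Y(x))`. -/
def lieB (X Y : R3 → R3) : R3 → R3 :=
  fun x => fderiv ℝ Y x (X x) - fderiv ℝ X x (Y x)

/-- Directional derivative `X(f)(x) = (Df)_x(X(x))`. -/
def dirD (X : R3 → R3) (f : R3 → ℝ) : R3 → ℝ :=
  fun x => fderiv ℝ f x (X x)

/-- A frame: three smooth vector fields, linearly independent at every point. -/
def IsFrame (D : Fin 3 → R3 → R3) : Prop :=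
  (∀ i, ContDiff ℝ (⊤ : ℕ∞) (D i)) ∧ ∀ x : R3, LinearIndependent ℝ fun i => D i x

/-- `c` is the family of (smooth) structure functions of the frame `D`:
`[D j, D k] = ∑ i, c j k i • D i`.  Here `c j k i` stands for `c_{jk}^i`. -/
def IsStructFns (D : Fin 3 → R3 → R3) (c : Fin 3 → Fin 3 → Fin 3 → R3 → ℝ) : Prop :=
  (∀ j k i, ContDiff ℝ (⊤ : ℕ∞) (c j k i)) ∧
    ∀ j k, ∀ x : R3, lieB (D j) (D k) x = ∑ i, c j k i x • D i x

/-- `(i,j,k)` is a cyclic permutation of `(1,2,3)` (as indices `(0,1,2)`). -/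
def Cyclic (i j k : Fin 3) : Prop :=
  (i, j, k) = (0, 1, 2) ∨ (i, j, k) = (1, 2, 0) ∨ (i, j, k) = (2, 0, 1)

/-- The BKL constraint equations for the datum `(D, c, g, ξ)`. -/
def BKLConstraints (D : Fin 3 → R3 → R3) (c : Fin 3 → Fin 3 → Fin 3 → R3 → ℝ)
    (g : Fin 3 → R3 → ℝ) (ξ : R3 → ℝ) : Prop :=
  (∀ x : R3, g 1 x * g 2 x + g 2 x * g 0 x + g 0 x * g 1 x = 0) ∧
    ∀ i j k : Fin 3, Cyclic i j k → ∀ x : R3,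
      dirD (D i) (fun y => g j y + g k y) x + c i j j x * (g i x - g j x)
        + c i k k x * (g i x - g k x) - 2 * dirD (D i) ξ x * g i x = 0

/-- Smoothness of the functions in a BKL datum. -/
def SmoothDatum (g : Fin 3 → R3 → ℝ) (ξ : R3 → ℝ) : Prop :=
  (∀ i, ContDiff ℝ (⊤ : ℕ∞) (g i)) ∧ ContDiff ℝ (⊤ : ℕ∞) ξ

/-- `B^f = exp (f · log B)`. -/
def bpow (B f : R3 → ℝ) : R3 → ℝ := fun x => Real.exp (f x * Real.log (B x))

/-- The transformed frame `D̂ i = σ A B^(g j + g k) • D i`, `(i,j,k)` cyclic. -/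
def confFrame (D : Fin 3 → R3 → R3) (g : Fin 3 → R3 → ℝ) (A B : R3 → ℝ) (σ : ℝ) :
    Fin 3 → R3 → R3 :=
  fun i x => (σ * A x * bpow B (fun y => g (i + 1) y + g (i + 2) y) x) • D i x

/-!
Rescaling the fields of a frame by nowhere-vanishing factors `φ i` gives a frame, and
`[φ j D j, φ k D k] = φ j φ k [D j, D k] + (terms along D j and D k)`, so for `i ∉ {j, k}` the
new structure functions satisfy `ĉ_(jk)^i φ i = φ j φ k c_(jk)^i`. For the conformal factors
`φ i = σ A B^(g j + g k)` one has `φ j φ k = σ A B^(2 g i) φ i` whenever `(i,j,k)` is cyclic.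
-/

def confFactor (g : Fin 3 → R3 → ℝ) (A B : R3 → ℝ) (σ : ℝ) (i : Fin 3) : R3 → ℝ :=
  fun x => σ * A x * bpow B (fun y => g (i + 1) y + g (i + 2) y) x

lemma confFrame_eq_smul (D : Fin 3 → R3 → R3) (g : Fin 3 → R3 → ℝ) (A B : R3 → ℝ) (σ : ℝ) :
    confFrame D g A B σ = fun i x => confFactor g A B σ i x • D i x := rfl

lemma Cyclic.eq_add_one_add_two {i j k : Fin 3} (h : Cyclic i j k) : j = i + 1 ∧ k = i + 2 := by
  rcases h with h | h | h <;> simp only [Prod.mk.injEq] at h <;> obtain ⟨rfl, rfl, rfl⟩ := h <;>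
    decide

lemma contDiff_bpow {B f : R3 → ℝ} (hB : ContDiff ℝ (⊤ : ℕ∞) B) (hB0 : ∀ x, B x ≠ 0)
    (hf : ContDiff ℝ (⊤ : ℕ∞) f) : ContDiff ℝ (⊤ : ℕ∞) (bpow B f) :=
  (hf.mul (hB.log hB0)).exp

lemma contDiff_confFactor {g : Fin 3 → R3 → ℝ} {A B : R3 → ℝ} (σ : ℝ)
    (hg : ∀ i, ContDiff ℝ (⊤ : ℕ∞) (g i)) (hA : ContDiff ℝ (⊤ : ℕ∞) A)
    (hB : ContDiff ℝ (⊤ : ℕ∞) B) (hB0 : ∀ x, B x ≠ 0) (i : Fin 3) :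
    ContDiff ℝ (⊤ : ℕ∞) (confFactor g A B σ i) :=
  (contDiff_const.mul hA).mul (contDiff_bpow hB hB0 ((hg _).add (hg _)))

lemma confFactor_ne_zero (g : Fin 3 → R3 → ℝ) {A : R3 → ℝ} (B : R3 → ℝ) {σ : ℝ}
    (hA : ∀ x, A x ≠ 0) (hσ : σ ≠ 0) (i : Fin 3) (x : R3) : confFactor g A B σ i x ≠ 0 :=
  mul_ne_zero (mul_ne_zero hσ (hA x)) (Real.exp_ne_zero _)

lemma confFactor_add_one_mul_add_two (g : Fin 3 → R3 → ℝ) (A B : R3 → ℝ) (σ : ℝ) (i : Fin 3)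
    (x : R3) :
    confFactor g A B σ (i + 1) x * confFactor g A B σ (i + 2) x
      = σ * A x * Real.exp (2 * g i x * Real.log (B x)) * confFactor g A B σ i x := by
  obtain ⟨h11, h12, h21, h22⟩ :
      i + 1 + 1 = i + 2 ∧ i + 1 + 2 = i ∧ i + 2 + 1 = i ∧ i + 2 + 2 = i + 1 := by
    revert i; decide
  simp only [confFactor, bpow, h11, h12, h21, h22]
  have hexp := congrArg Real.exp (show (g (i + 2) x + g i x) * Real.log (B x)
      + (g i x + g (i + 1) x) * Real.log (B x)
      = 2 * g i x * Real.log (B x) + (g (i + 1) x + g (i + 2) x) * Real.log (B x) by ring)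
  rw [Real.exp_add, Real.exp_add] at hexp
  linear_combination σ * A x * (σ * A x) * hexp

lemma lieB_smul_smul {φ ψ : R3 → ℝ} {X Y : R3 → R3} {x : R3}
    (hφ : DifferentiableAt ℝ φ x) (hψ : DifferentiableAt ℝ ψ x)
    (hX : DifferentiableAt ℝ X x) (hY : DifferentiableAt ℝ Y x) :
    lieB (fun y => φ y • X y) (fun y => ψ y • Y y) x
      = (φ x * ψ x) • lieB X Y x + (φ x * dirD X ψ x) • Y x - (ψ x * dirD Y φ x) • X x := by
  unfold lieB dirD
  rw [fderiv_fun_smul hψ hY, fderiv_fun_smul hφ hX]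
  simp only [add_apply, FunLike.coe_smul, Pi.smul_apply, ContinuousLinearMap.smulRight_apply,
    map_smul]
  module

lemma IsFrame.smul {D : Fin 3 → R3 → R3} {φ : Fin 3 → R3 → ℝ} (hD : IsFrame D)
    (hφ : ∀ i, ContDiff ℝ (⊤ : ℕ∞) (φ i)) (hφ0 : ∀ i x, φ i x ≠ 0) :
    IsFrame fun i x => φ i x • D i x :=
  ⟨fun i => (hφ i).smul (hD.1 i),
    fun x => (hD.2 x).units_smul fun i => Units.mk0 (φ i x) (hφ0 i x)⟩

lemma IsStructFns.mul_eq_of_smul {D : Fin 3 → R3 → R3} {c ĉ : Fin 3 → Fin 3 → Fin 3 → R3 → ℝ}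
    {φ : Fin 3 → R3 → ℝ} (hD : IsFrame D) (hc : IsStructFns D c)
    (hφ : ∀ i, Differentiable ℝ (φ i)) (hĉ : IsStructFns (fun i x => φ i x • D i x) ĉ)
    {i j k : Fin 3} (hij : i ≠ j) (hik : i ≠ k) (x : R3) :
    ĉ j k i x * φ i x = φ j x * φ k x * c j k i x := by
  have hDdiff : ∀ m, DifferentiableAt ℝ (D m) x :=
    fun m => ((hD.1 m).differentiable (by simp)).differentiableAt
  have hbracket := hĉ.2 j k x
  rw [lieB_smul_smul (hφ j x) (hφ k x) (hDdiff j) (hDdiff k), hc.2 j k x] at hbracket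
  let b := basisOfLinearIndependentOfCardEqFinrank (hD.2 x) (by simp)
  have hb : ∀ m, D m x = b m := fun m => by simp [b]
  have hcoord := congrArg (b.coord i) hbracket
  simp only [hb, map_add, map_sub, map_sum, map_smul, Module.Basis.coord_apply,
    Module.Basis.repr_self, Finsupp.single_apply, if_neg hij.symm, if_neg hik.symm, smul_eq_mul,
    mul_ite, mul_one, mul_zero, Finset.sum_ite_eq', Finset.mem_univ, if_true, add_zero,
    sub_zero] at hcoord
  linarith

/-- structure functions of a conformally transformed frame:
`ĉ_(jk)^i = σ A B^(2 g_i) c_(jk)^i` for cyclic `(i,j,k)`. -/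
theorem conformal_structure_functions
    (D : Fin 3 → R3 → R3) (c : Fin 3 → Fin 3 → Fin 3 → R3 → ℝ)
    (hD : IsFrame D) (hc : IsStructFns D c)
    (g : Fin 3 → R3 → ℝ) (hg : ∀ i, ContDiff ℝ (⊤ : ℕ∞) (g i))
    (A B : R3 → ℝ) (hA : ContDiff ℝ (⊤ : ℕ∞) A) (hApos : ∀ x : R3, 0 < A x)
    (hB : ContDiff ℝ (⊤ : ℕ∞) B) (hBpos : ∀ x : R3, 0 < B x)
    (σ : ℝ) (hσ : σ = 1 ∨ σ = -1) :
    IsFrame (confFrame D g A B σ) ∧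
    ∀ chat : Fin 3 → Fin 3 → Fin 3 → R3 → ℝ, IsStructFns (confFrame D g A B σ) chat →
      ∀ i j k : Fin 3, Cyclic i j k → ∀ x : R3,
        chat j k i x = σ * A x * Real.exp (2 * g i x * Real.log (B x)) * c j k i x := by
  have hφ := contDiff_confFactor σ hg hA hB fun x => (hBpos x).ne'
  have hσ0 : σ ≠ 0 := by rcases hσ with rfl | rfl <;> norm_num
  have hφ0 := confFactor_ne_zero g B (fun x => (hApos x).ne') hσ0
  rw [confFrame_eq_smul]
  refine ⟨hD.smul hφ hφ0, fun chat hchat i j k hcyc x => ?_⟩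
  obtain ⟨rfl, rfl⟩ := hcyc.eq_add_one_add_two
  have hdiff : ∀ m, Differentiable ℝ (confFactor g A B σ m) :=
    fun m => (hφ m).differentiable (by simp)
  have hne : ∀ m : Fin 3, m ≠ m + 1 ∧ m ≠ m + 2 := by decide
  have hcoeff := hc.mul_eq_of_smul hD hdiff hchat (hne i).1 (hne i).2 x
  rw [confFactor_add_one_mul_add_two] at hcoeff
  exact mul_right_cancel₀ (hφ0 i x) (by linear_combination hcoeff)
end
end

section
/- Let (D₁, D₂, D₃, c, g₁, g₂, g₃, ξ) be a BKL datum satisfying the BKL constraints that is in normal form with parameter u, and suppose u ≠ 1/2 and u ≠ 2 at every point of ℝ³. Define g₂³ = −c_{12}^1 − D₂(ξ) and g₃⁴ = −c_{31}^1 + D₃(ξ), and set D̃₁ = D₁ − (2 g₃⁴/(u−2)) D₂ + (2 u g₂³/(2u−1)) D₃. Then D̃₁, D₂, D₃ is a frame, and (D̃₁, D₂, D₃, c̃, −1/2, (1−u)/2, (1−1/u)/2, ξ), with c̃ its structure functions, is a BKL datum satisfying the BKL constraints. -/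
noncomputable section

/-- `g₂³ = −c_{12}^1 − D₂(ξ)` (indices `1,2,3` are `0,1,2`). -/
def g23fn (D : Fin 3 → R3 → R3) (c : Fin 3 → Fin 3 → Fin 3 → R3 → ℝ) (ξ : R3 → ℝ) :
    R3 → ℝ :=
  fun x => -c 0 1 0 x - dirD (D 1) ξ x

/-- `g₃⁴ = −c_{31}^1 + D₃(ξ)`. -/
def g34fn (D : Fin 3 → R3 → R3) (c : Fin 3 → Fin 3 → Fin 3 → R3 → ℝ) (ξ : R3 → ℝ) :
    R3 → ℝ :=
  fun x => -c 2 0 0 x + dirD (D 2) ξ x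

/-- `D̃₁ = D₁ − (2 g₃⁴/(u−2)) D₂ + (2 u g₂³/(2u−1)) D₃`. -/
def tiltedD1 (D : Fin 3 → R3 → R3) (c : Fin 3 → Fin 3 → Fin 3 → R3 → ℝ)
    (ξ u : R3 → ℝ) : R3 → R3 :=
  fun x => D 0 x - (2 * g34fn D c ξ x / (u x - 2)) • D 1 x
    + (2 * u x * g23fn D c ξ x / (2 * u x - 1)) • D 2 x

/-- Normal form: `(g₁,g₂,g₃) = (1/2, −(1+u)/2, −(1+1/u)/2)` and `c_{23}^1 = −2`. -/
def IsNormalForm (c : Fin 3 → Fin 3 → Fin 3 → R3 → ℝ)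
    (g : Fin 3 → R3 → ℝ) (u : R3 → ℝ) : Prop :=
  ContDiff ℝ (⊤ : ℕ∞) u ∧ (∀ x : R3, 0 < u x) ∧
    (∀ x : R3, g 0 x = 1 / 2) ∧ (∀ x : R3, g 1 x = -(1 + u x) / 2) ∧
    (∀ x : R3, g 2 x = -(1 + 1 / u x) / 2) ∧ ∀ x : R3, c 1 2 0 x = -2

/-!
The field `D̃₁ = D₁ + A D₂ + B D₃` shears the frame, so the structure functions of
`(D̃₁, D₂, D₃)` are those of `D` corrected by `A`, `B` and their derivatives, explicitly so since
`c_{23}^1 = −2`. The new second and third constraints differ from the old ones by multiples of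
`B (2u − 1) − 2u g₂³` and `A (u − 2) + 2 g₃⁴`, which vanish by the choice of `A` and `B`.
The new first constraint is the old first one plus `A` and `B` times the other two, up to terms
in `D₂A` and `D₃B`. Differentiating the defining relations of `A` and `B` turns these into
`D₂D₃ξ − D₃D₂ξ` and `D₂c_{31}^1 + D₃c_{12}^1`, which are eliminated by `[D₂, D₃]ξ` and by the
`D₁`-component of the Jacobi identity.
-/

open VectorField

theorem lieB_eq_lieBracket : lieB = lieBracket ℝ := rfl

section DirectionalDerivative

variable {X Y : R3 → R3} {f h : R3 → ℝ} {x : R3}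

theorem dirD_contDiff (hX : ContDiff ℝ (⊤ : ℕ∞) X) (hf : ContDiff ℝ (⊤ : ℕ∞) f) :
    ContDiff ℝ (⊤ : ℕ∞) (dirD X f) :=
  (hf.fderiv_right (by exact_mod_cast le_top)).clm_apply hX

theorem dirD_const (X : R3 → R3) (a : ℝ) (x : R3) : dirD X (fun _ => a) x = 0 := by
  simp [dirD]

theorem dirD_mul (hf : DifferentiableAt ℝ f x) (hh : DifferentiableAt ℝ h x) :
    dirD X (fun y => f y * h y) x = dirD X f x * h x + f x * dirD X h x := by
  simp only [dirD, fderiv_fun_mul hf hh, add_apply, smul_apply, smul_eq_mul]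
  ring

theorem dirD_neg (X : R3 → R3) (f : R3 → ℝ) (x : R3) :
    dirD X (fun y => -f y) x = -dirD X f x := by
  simp [dirD, fderiv_fun_neg]

theorem dirD_sub (hf : DifferentiableAt ℝ f x) (hh : DifferentiableAt ℝ h x) :
    dirD X (fun y => f y - h y) x = dirD X f x - dirD X h x := by
  simp [dirD, fderiv_fun_sub hf hh]

theorem dirD_const_mul (a : ℝ) (hf : DifferentiableAt ℝ f x) :
    dirD X (fun y => a * f y) x = a * dirD X f x := by
  simp [dirD, fderiv_const_mul hf]

theorem dirD_sum_smul {ι : Type*} [Fintype ι] (v : ι → R3 → R3) (a : ι → ℝ)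
    (hX : X x = ∑ i, a i • v i x) : dirD X f x = ∑ i, a i * dirD (v i) f x := by
  simp [dirD, hX]

theorem dirD_affine_add_inv (a b e : ℝ) (hh : DifferentiableAt ℝ h x) (hx : h x ≠ 0) :
    dirD X (fun y => a * h y + b / h y + e) x = (a - b / h x ^ 2) * dirD X h x := by
  have hφ : HasDerivAt (fun t : ℝ => a * t + b * t⁻¹ + e) (a - b / h x ^ 2) (h x) :=
    ((((hasDerivAt_id' (h x)).const_mul a).fun_add
      ((hasDerivAt_inv hx).const_mul b)).add_const e).congr_deriv (by ring)
  have hcomp : (fun y => a * h y + b / h y + e) = (fun t : ℝ => a * t + b * t⁻¹ + e) ∘ h := by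
    funext y; simp [div_eq_mul_inv]
  simp [dirD, hcomp, (hφ.comp_hasFDerivAt x hh.hasFDerivAt).fderiv]

theorem dirD_lieB (hf : ContDiffAt ℝ 2 f x) (hX : DifferentiableAt ℝ X x)
    (hY : DifferentiableAt ℝ Y x) :
    dirD (lieB X Y) f x = dirD X (dirD Y f) x - dirD Y (dirD X f) x :=
  fderiv_apply_lieBracket hf (by simp) hY hX

end DirectionalDerivative

theorem lieB_sum_smul_right {ι : Type*} [Fintype ι] {V : R3 → R3} {W : ι → R3 → R3}
    {f : ι → R3 → ℝ} {x : R3} (hf : ∀ i, DifferentiableAt ℝ (f i) x)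
    (hW : ∀ i, DifferentiableAt ℝ (W i) x) :
    lieB V (fun y => ∑ i, f i y • W i y) x
      = ∑ i, (dirD V (f i) x • W i x + f i x • lieB V (W i) x) := by
  have hsum : HasFDerivAt (fun y => ∑ i, f i y • W i y)
      (∑ i, (f i x • fderiv ℝ (W i) x + (fderiv ℝ (f i) x).smulRight (W i x))) x :=
    HasFDerivAt.fun_sum fun i _ => (hf i).hasFDerivAt.smul (hW i).hasFDerivAt
  simp only [lieB, dirD, hsum.fderiv, add_apply, sum_apply, smul_apply,
    ContinuousLinearMap.smulRight_apply, map_sum, map_smul, smul_sub, Finset.sum_add_distrib,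
    Finset.sum_sub_distrib]
  abel

theorem lieB_cyclic {U V W : R3 → R3} {x : R3} (hU : ContDiffAt ℝ 2 U x)
    (hV : ContDiffAt ℝ 2 V x) (hW : ContDiffAt ℝ 2 W x) :
    lieB U (lieB V W) x + lieB V (lieB W U) x + lieB W (lieB U V) x = 0 := by
  have hleib : lieB U (lieB V W) x = lieB (lieB U V) W x + lieB V (lieB U W) x :=
    leibniz_identity_lieBracket (by simp) hU hV hW
  have hswap : lieB U W = fun y => -lieB W U y :=
    funext fun y => lieBracket_swap (V := U) (W := W) (x := y)
  have hneg : lieB V (fun y => -lieB W U y) x = -lieB V (lieB W U) x := by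
    generalize lieB W U = F
    simp only [lieB, fderiv_fun_neg, neg_apply, map_neg]
    abel
  rw [hleib, hswap, hneg, lieB_eq_lieBracket, lieBracket_swap (V := lieBracket ℝ U V)]
  abel

section Frame

variable {D : Fin 3 → R3 → R3} {c : Fin 3 → Fin 3 → Fin 3 → R3 → ℝ}

theorem IsStructFns.eq_of_lieB_eq (hc : IsStructFns D c) (hD : IsFrame D) {j k : Fin 3}
    {x : R3} {a : Fin 3 → ℝ} (h : lieB (D j) (D k) x = ∑ i, a i • D i x) (i : Fin 3) :
    c j k i x = a i :=
  Fintype.linearIndependent_iffₛ.mp (hD.2 x) _ _ ((hc.2 j k x).symm.trans h) i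

theorem IsStructFns.antisymm (hc : IsStructFns D c) (hD : IsFrame D) (j k i : Fin 3) (x : R3) :
    c j k i x = -c k j i x :=
  hc.eq_of_lieB_eq hD (a := fun i => -c k j i x) (by
    rw [lieB_eq_lieBracket, lieBracket_swap, ← lieB_eq_lieBracket, hc.2 k j x]
    simp [Finset.sum_neg_distrib]) i

theorem IsStructFns.self_eq_zero (hc : IsStructFns D c) (hD : IsFrame D) (j i : Fin 3)
    (x : R3) : c j j i x = 0 := by
  linarith [hc.antisymm hD j j i x]

theorem IsStructFns.lieB_lieB (hc : IsStructFns D c) (hD : IsFrame D) (a b k : Fin 3)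
    (x : R3) :
    lieB (D a) (lieB (D b) (D k)) x
      = ∑ i, (dirD (D a) (c b k i) x + ∑ m, c b k m x * c a m i x) • D i x := by
  rw [show lieB (D b) (D k) = fun y => ∑ m, c b k m y • D m y from funext (hc.2 b k),
    lieB_sum_smul_right (fun m => ((hc.1 b k m).differentiable (by simp)) x)
      (fun m => ((hD.1 m).differentiable (by simp)) x)]
  simp only [hc.2 a, Fin.sum_univ_three]
  module

theorem IsStructFns.jacobi (hc : IsStructFns D c) (hD : IsFrame D) (a b k i : Fin 3)
    (x : R3) :
    dirD (D a) (c b k i) x + dirD (D b) (c k a i) x + dirD (D k) (c a b i) x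
      + ∑ m, (c b k m x * c a m i x + c k a m x * c b m i x + c a b m x * c k m i x) = 0 := by
  have hsmooth : ∀ l, ContDiffAt ℝ 2 (D l) x := fun l =>
    (hD.1 l).contDiffAt.of_le (WithTop.coe_le_coe.mpr le_top)
  have h := lieB_cyclic (hsmooth a) (hsmooth b) (hsmooth k)
  rw [hc.lieB_lieB hD, hc.lieB_lieB hD, hc.lieB_lieB hD, ← Finset.sum_add_distrib,
    ← Finset.sum_add_distrib] at h
  simp_rw [← add_smul] at h
  rw [← Fintype.linearIndependent_iff.mp (hD.2 x) _ h i, Finset.sum_add_distrib,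
    Finset.sum_add_distrib]
  ring

end Frame

def shearFrame (D : Fin 3 → R3 → R3) (A B : R3 → ℝ) : Fin 3 → R3 → R3 :=
  ![fun x => D 0 x + A x • D 1 x + B x • D 2 x, D 1, D 2]

section ShearFrame

variable {D : Fin 3 → R3 → R3} {c ct : Fin 3 → Fin 3 → Fin 3 → R3 → ℝ} {A B : R3 → ℝ}

theorem isFrame_shearFrame (hD : IsFrame D) (hA : ContDiff ℝ (⊤ : ℕ∞) A)
    (hB : ContDiff ℝ (⊤ : ℕ∞) B) : IsFrame (shearFrame D A B) := by
  refine ⟨fun i => ?_, fun x => Fintype.linearIndependent_iff.mpr fun t ht => ?_⟩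
  · fin_cases i
    · exact ((hD.1 0).add (hA.smul (hD.1 1))).add (hB.smul (hD.1 2))
    · exact hD.1 1
    · exact hD.1 2
  · have h := Fintype.linearIndependent_iff.mp (hD.2 x)
      ![t 0, t 0 * A x + t 1, t 0 * B x + t 2] (by
        simp only [Fin.sum_univ_three, shearFrame, Matrix.cons_val_zero, Matrix.cons_val_one,
          Matrix.cons_val_two, Matrix.head_cons, Matrix.tail_cons] at ht ⊢
        linear_combination (norm := module) ht)
    have e0 : t 0 = 0 := h 0
    have e1 : t 0 * A x + t 1 = 0 := h 1
    have e2 : t 0 * B x + t 2 = 0 := h 2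
    rw [e0, zero_mul, zero_add] at e1 e2
    intro i
    fin_cases i <;> assumption

theorem IsStructFns.shearFrame_coeff (hct : IsStructFns (shearFrame D A B) ct)
    (hE : IsFrame (shearFrame D A B)) {j k : Fin 3} {x : R3} {a : Fin 3 → ℝ}
    (h : lieB (shearFrame D A B j) (shearFrame D A B k) x = ∑ i, a i • D i x) :
    ct j k 0 x = a 0 ∧ ct j k 1 x = a 1 - a 0 * A x ∧ ct j k 2 x = a 2 - a 0 * B x := by
  have h' := hct.eq_of_lieB_eq hE (a := ![a 0, a 1 - a 0 * A x, a 2 - a 0 * B x]) (h.trans (by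
    simp only [Fin.sum_univ_three, shearFrame, Matrix.cons_val_zero, Matrix.cons_val_one,
      Matrix.cons_val_two, Matrix.head_cons, Matrix.tail_cons]
    module))
  exact ⟨h' 0, h' 1, h' 2⟩

theorem dirD_shearFrame_zero (f : R3 → ℝ) (x : R3) :
    dirD (shearFrame D A B 0) f x
      = dirD (D 0) f x + A x * dirD (D 1) f x + B x * dirD (D 2) f x := by
  simp [dirD, shearFrame]

theorem IsStructFns.lieB_shearFrame_zero (hc : IsStructFns D c) (hD : IsFrame D) {x : R3}
    (hA : DifferentiableAt ℝ A x) (hB : DifferentiableAt ℝ B x) (l : Fin 3) :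
    lieB (shearFrame D A B 0) (D l) x
      = ∑ i, (c 0 l i x + A x * c 1 l i x + B x * c 2 l i x) • D i x
        - dirD (D l) A x • D 1 x - dirD (D l) B x • D 2 x := by
  have hDx : ∀ i, DifferentiableAt ℝ (D i) x := fun i => (hD.1 i).differentiable (by simp) x
  have hsplit : shearFrame D A B 0 = (D 0 + fun y => A y • D 1 y) + fun y => B y • D 2 y := rfl
  rw [hsplit, lieB_eq_lieBracket,
    lieBracket_add_left ((hDx 0).add (hA.fun_smul (hDx 1))) (hB.fun_smul (hDx 2)),
    lieBracket_add_left (hDx 0) (hA.fun_smul (hDx 1)), lieBracket_smul_left hA (hDx 1),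
    lieBracket_smul_left hB (hDx 2), ← lieB_eq_lieBracket, hc.2 0 l x, hc.2 1 l x, hc.2 2 l x]
  simp only [Fin.sum_univ_three, dirD]
  module

theorem IsStructFns.shearFrame_one_two (hc : IsStructFns D c) (hD : IsFrame D)
    (hA : ContDiff ℝ (⊤ : ℕ∞) A) (hB : ContDiff ℝ (⊤ : ℕ∞) B) (h120 : ∀ x, c 1 2 0 x = -2)
    (hct : IsStructFns (shearFrame D A B) ct) (x : R3) :
    ct 1 2 1 x = c 1 2 1 x + 2 * A x ∧ ct 1 2 2 x = c 1 2 2 x + 2 * B x := by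
  obtain ⟨-, h1, h2⟩ :=
    hct.shearFrame_coeff (isFrame_shearFrame hD hA hB) (j := 1) (k := 2) (hc.2 1 2 x)
  rw [h120] at h1 h2
  exact ⟨by linarith, by linarith⟩

theorem IsStructFns.shearFrame_zero_one (hc : IsStructFns D c) (hD : IsFrame D)
    (hA : ContDiff ℝ (⊤ : ℕ∞) A) (hB : ContDiff ℝ (⊤ : ℕ∞) B) (h120 : ∀ x, c 1 2 0 x = -2)
    (hct : IsStructFns (shearFrame D A B) ct) (x : R3) :
    ct 0 1 0 x = c 0 1 0 x + 2 * B x ∧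
      ct 0 1 1 x = c 0 1 1 x - B x * c 1 2 1 x - dirD (D 1) A x - ct 0 1 0 x * A x := by
  have hbr := hc.lieB_shearFrame_zero hD (hA.differentiable (by simp) x)
    (hB.differentiable (by simp) x) 1
  rw [Fin.sum_univ_three, hc.self_eq_zero hD 1 0 x, hc.self_eq_zero hD 1 1 x,
    hc.antisymm hD 2 1 0 x, hc.antisymm hD 2 1 1 x, h120] at hbr
  obtain ⟨h0, h1, -⟩ := hct.shearFrame_coeff (isFrame_shearFrame hD hA hB) (j := 0) (k := 1)
    (a := ![c 0 1 0 x + 2 * B x, c 0 1 1 x - B x * c 1 2 1 x - dirD (D 1) A x,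
      c 0 1 2 x + A x * c 1 1 2 x + B x * c 2 1 2 x - dirD (D 1) B x])
    (hbr.trans (by
      simp only [Fin.sum_univ_three, Matrix.cons_val_zero, Matrix.cons_val_one,
        Matrix.cons_val_two, Matrix.head_cons, Matrix.tail_cons]
      module))
  simp only [Matrix.cons_val_zero, Matrix.cons_val_one] at h0 h1
  exact ⟨h0, by rw [h1, h0]⟩

theorem IsStructFns.shearFrame_zero_two (hc : IsStructFns D c) (hD : IsFrame D)
    (hA : ContDiff ℝ (⊤ : ℕ∞) A) (hB : ContDiff ℝ (⊤ : ℕ∞) B) (h120 : ∀ x, c 1 2 0 x = -2)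
    (hct : IsStructFns (shearFrame D A B) ct) (x : R3) :
    ct 0 2 0 x = c 0 2 0 x - 2 * A x ∧
      ct 0 2 2 x = c 0 2 2 x + A x * c 1 2 2 x - dirD (D 2) B x - ct 0 2 0 x * B x := by
  have hbr := hc.lieB_shearFrame_zero hD (hA.differentiable (by simp) x)
    (hB.differentiable (by simp) x) 2
  rw [Fin.sum_univ_three, hc.self_eq_zero hD 2 0 x, hc.self_eq_zero hD 2 2 x, h120] at hbr
  obtain ⟨h0, -, h2⟩ := hct.shearFrame_coeff (isFrame_shearFrame hD hA hB) (j := 0) (k := 2)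
    (a := ![c 0 2 0 x - 2 * A x,
      c 0 2 1 x + A x * c 1 2 1 x + B x * c 2 2 1 x - dirD (D 2) A x,
      c 0 2 2 x + A x * c 1 2 2 x - dirD (D 2) B x])
    (hbr.trans (by
      simp only [Fin.sum_univ_three, Matrix.cons_val_zero, Matrix.cons_val_one,
        Matrix.cons_val_two, Matrix.head_cons, Matrix.tail_cons]
      module))
  simp only [Matrix.cons_val_zero, Matrix.cons_val_two, Matrix.tail_cons,
    Matrix.head_cons] at h0 h2
  exact ⟨h0, by rw [h2, h0]⟩

end ShearFrame

def tiltA (D : Fin 3 → R3 → R3) (c : Fin 3 → Fin 3 → Fin 3 → R3 → ℝ) (ξ u : R3 → ℝ) :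
    R3 → ℝ :=
  fun x => -(2 * g34fn D c ξ x / (u x - 2))

def tiltB (D : Fin 3 → R3 → R3) (c : Fin 3 → Fin 3 → Fin 3 → R3 → ℝ) (ξ u : R3 → ℝ) :
    R3 → ℝ :=
  fun x => 2 * u x * g23fn D c ξ x / (2 * u x - 1)

def outG (u : R3 → ℝ) : Fin 3 → R3 → ℝ :=
  ![fun _ => -(1 / 2 : ℝ), fun x => (1 - u x) / 2, fun x => (1 - 1 / u x) / 2]

section NormalForm

variable {D : Fin 3 → R3 → R3} {c ct : Fin 3 → Fin 3 → Fin 3 → R3 → ℝ} {g : Fin 3 → R3 → ℝ}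
  {ξ u : R3 → ℝ}

theorem tilted_eq_shearFrame (D : Fin 3 → R3 → R3) (c : Fin 3 → Fin 3 → Fin 3 → R3 → ℝ)
    (ξ u : R3 → ℝ) :
    ![tiltedD1 D c ξ u, D 1, D 2] = shearFrame D (tiltA D c ξ u) (tiltB D c ξ u) := by
  ext i x : 2
  fin_cases i
  · show tiltedD1 D c ξ u x = D 0 x + tiltA D c ξ u x • D 1 x + tiltB D c ξ u x • D 2 x
    simp only [tiltedD1, tiltA, tiltB]
    module
  · rfl
  · rfl

theorem contDiff_tiltA (hD : IsFrame D) (hc : IsStructFns D c) (hξ : ContDiff ℝ (⊤ : ℕ∞) ξ)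
    (hu : ContDiff ℝ (⊤ : ℕ∞) u) (hu2 : ∀ x, u x ≠ 2) :
    ContDiff ℝ (⊤ : ℕ∞) (tiltA D c ξ u) :=
  ((contDiff_const.mul ((hc.1 2 0 0).neg.add (dirD_contDiff (hD.1 2) hξ))).div
    (hu.sub contDiff_const) fun x => sub_ne_zero.mpr (hu2 x)).neg

theorem contDiff_tiltB (hD : IsFrame D) (hc : IsStructFns D c) (hξ : ContDiff ℝ (⊤ : ℕ∞) ξ)
    (hu : ContDiff ℝ (⊤ : ℕ∞) u) (hu1 : ∀ x, u x ≠ 1 / 2) :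
    ContDiff ℝ (⊤ : ℕ∞) (tiltB D c ξ u) :=
  ((contDiff_const.mul hu).mul ((hc.1 0 1 0).neg.sub (dirD_contDiff (hD.1 1) hξ))).div
    ((contDiff_const.mul hu).sub contDiff_const) fun x h => hu1 x (by linarith)

theorem dirD_tiltA_mul (hD : IsFrame D) (hc : IsStructFns D c) (hξ : ContDiff ℝ (⊤ : ℕ∞) ξ)
    (hu : ContDiff ℝ (⊤ : ℕ∞) u) (hu2 : ∀ x, u x ≠ 2) (X : R3 → R3) (x : R3) :
    dirD X (tiltA D c ξ u) x * (u x - 2) + tiltA D c ξ u x * dirD X u x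
      = 2 * (dirD X (c 2 0 0) x - dirD X (dirD (D 2) ξ) x) := by
  have hprod : (fun y => tiltA D c ξ u y * (u y - 2))
      = fun y => 2 * (c 2 0 0 y - dirD (D 2) ξ y) := funext fun y => by
    simp only [tiltA, g34fn]
    field_simp [sub_ne_zero.mpr (hu2 y)]
    ring
  have h := congrArg (fun f => dirD X f x) hprod
  have hud := hu.differentiable (by simp) x
  have hcd := (hc.1 2 0 0).differentiable (by simp) x
  have hξd := (dirD_contDiff (hD.1 2) hξ).differentiable (by simp) x
  rw [dirD_mul ((contDiff_tiltA hD hc hξ hu hu2).differentiable (by simp) x)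
      (hud.sub_const 2), dirD_sub hud (differentiableAt_const 2), dirD_const,
    dirD_const_mul _ (hcd.fun_sub hξd), dirD_sub hcd hξd] at h
  linear_combination h

theorem dirD_tiltB_mul (hD : IsFrame D) (hc : IsStructFns D c) (hξ : ContDiff ℝ (⊤ : ℕ∞) ξ)
    (hu : ContDiff ℝ (⊤ : ℕ∞) u) (hu1 : ∀ x, u x ≠ 1 / 2) (X : R3 → R3) (x : R3) :
    dirD X (tiltB D c ξ u) x * (2 * u x - 1) + 2 * tiltB D c ξ u x * dirD X u x
      = 2 * dirD X u x * g23fn D c ξ x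
        - 2 * u x * (dirD X (c 0 1 0) x + dirD X (dirD (D 1) ξ) x) := by
  have hprod : (fun y => tiltB D c ξ u y * (2 * u y - 1))
      = fun y => 2 * u y * (-c 0 1 0 y - dirD (D 1) ξ y) := funext fun y => by
    have h2u : 2 * u y - 1 ≠ 0 := fun h => hu1 y (by linarith)
    simp only [tiltB, g23fn]
    field_simp
  have h := congrArg (fun f => dirD X f x) hprod
  have hud := hu.differentiable (by simp) x
  have hcd := (hc.1 0 1 0).differentiable (by simp) x
  have hξd := (dirD_contDiff (hD.1 1) hξ).differentiable (by simp) x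
  rw [dirD_mul ((contDiff_tiltB hD hc hξ hu hu1).differentiable (by simp) x)
      ((hud.const_mul 2).sub_const 1), dirD_sub (hud.const_mul 2) (differentiableAt_const 1),
    dirD_const, dirD_const_mul _ hud, dirD_mul (hud.const_mul 2) (hcd.fun_neg.fun_sub hξd),
    dirD_const_mul _ hud, dirD_sub hcd.fun_neg hξd, dirD_neg] at h
  simp only [g23fn]
  linear_combination h

theorem dirD_comm_of_normalForm (hD : IsFrame D) (hc : IsStructFns D c)
    (hξ : ContDiff ℝ (⊤ : ℕ∞) ξ) (h120 : ∀ x, c 1 2 0 x = -2) (x : R3) :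
    dirD (D 1) (dirD (D 2) ξ) x - dirD (D 2) (dirD (D 1) ξ) x
      = -2 * dirD (D 0) ξ x + c 1 2 1 x * dirD (D 1) ξ x + c 1 2 2 x * dirD (D 2) ξ x := by
  rw [← dirD_lieB (hξ.contDiffAt.of_le (WithTop.coe_le_coe.mpr le_top))
      ((hD.1 1).differentiable (by simp) x) ((hD.1 2).differentiable (by simp) x),
    dirD_sum_smul D _ (hc.2 1 2 x), Fin.sum_univ_three, h120]

theorem jacobi_of_normalForm (hD : IsFrame D) (hc : IsStructFns D c)
    (h120 : ∀ x, c 1 2 0 x = -2) (x : R3) :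
    dirD (D 1) (c 2 0 0) x + dirD (D 2) (c 0 1 0) x
      = -c 1 2 1 x * c 0 1 0 x + c 1 2 2 x * c 2 0 0 x - 2 * c 0 2 2 x - 2 * c 0 1 1 x := by
  have h := hc.jacobi hD 0 1 2 0 x
  have hconst : c 1 2 0 = fun _ => -2 := funext h120
  rw [Fin.sum_univ_three, hc.self_eq_zero hD 0 0 x, hc.self_eq_zero hD 1 0 x,
    hc.self_eq_zero hD 2 0 x, hc.antisymm hD 1 0 0 x, hc.antisymm hD 2 1 0 x,
    hc.antisymm hD 0 2 0 x, hc.antisymm hD 2 0 2 x, hconst, dirD_const] at h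
  linear_combination h

end NormalForm

section OutDatum

variable {D : Fin 3 → R3 → R3} {c ct : Fin 3 → Fin 3 → Fin 3 → R3 → ℝ} {g : Fin 3 → R3 → ℝ}
  {ξ u : R3 → ℝ}

theorem bklConstraints_out_one (hD : IsFrame D) (hc : IsStructFns D c)
    (hξ : ContDiff ℝ (⊤ : ℕ∞) ξ) (hcon : BKLConstraints D c g ξ) (hnf : IsNormalForm c g u)
    (hu : ∀ x, u x ≠ 1 / 2 ∧ u x ≠ 2)
    (hct : IsStructFns (shearFrame D (tiltA D c ξ u) (tiltB D c ξ u)) ct) (x : R3) :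
    dirD (D 1) (fun y => outG u 2 y + outG u 0 y) x + ct 1 2 2 x * (outG u 1 x - outG u 2 x)
      + ct 1 0 0 x * (outG u 1 x - outG u 0 x) - 2 * dirD (D 1) ξ x * outG u 1 x = 0 := by
  obtain ⟨hus, hupos, hg0, hg1, hg2, h120⟩ := hnf
  have hA := contDiff_tiltA hD hc hξ hus fun x => (hu x).2
  have hB := contDiff_tiltB hD hc hξ hus fun x => (hu x).1
  have hsum : (fun y => outG u 2 y + outG u 0 y) = fun y => g 2 y + g 0 y :=
    funext fun y => show (1 - 1 / u y) / 2 + -(1 / 2) = g 2 y + g 0 y by rw [hg2, hg0]; ring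
  obtain ⟨-, h122⟩ := hc.shearFrame_one_two hD hA hB h120 hct x
  obtain ⟨h010, -⟩ := hc.shearFrame_zero_one hD hA hB h120 hct x
  have hold := hcon.2 1 2 0 (Or.inr (Or.inl rfl)) x
  rw [hg0, hg1, hg2, hc.antisymm hD 1 0 0 x] at hold
  rw [hsum, h122, hct.antisymm (isFrame_shearFrame hD hA hB) 1 0 0 x, h010]
  have h2u : 2 * u x - 1 ≠ 0 := fun h => (hu x).1 (by linarith)
  have hu0 := (hupos x).ne'
  simp only [outG, tiltB, g23fn, Matrix.cons_val_zero, Matrix.cons_val_one, Matrix.cons_val_two,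
    Matrix.head_cons, Matrix.tail_cons]
  linear_combination (norm := (field_simp; ring1)) hold

theorem bklConstraints_out_two (hD : IsFrame D) (hc : IsStructFns D c)
    (hξ : ContDiff ℝ (⊤ : ℕ∞) ξ) (hcon : BKLConstraints D c g ξ) (hnf : IsNormalForm c g u)
    (hu : ∀ x, u x ≠ 1 / 2 ∧ u x ≠ 2)
    (hct : IsStructFns (shearFrame D (tiltA D c ξ u) (tiltB D c ξ u)) ct) (x : R3) :
    dirD (D 2) (fun y => outG u 0 y + outG u 1 y) x + ct 2 0 0 x * (outG u 2 x - outG u 0 x)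
      + ct 2 1 1 x * (outG u 2 x - outG u 1 x) - 2 * dirD (D 2) ξ x * outG u 2 x = 0 := by
  obtain ⟨hus, hupos, hg0, hg1, hg2, h120⟩ := hnf
  have hA := contDiff_tiltA hD hc hξ hus fun x => (hu x).2
  have hB := contDiff_tiltB hD hc hξ hus fun x => (hu x).1
  have hE := isFrame_shearFrame hD hA hB
  have hsum : (fun y => outG u 0 y + outG u 1 y) = fun y => g 0 y + g 1 y :=
    funext fun y => show -(1 / 2) + (1 - u y) / 2 = g 0 y + g 1 y by rw [hg0, hg1]; ring
  obtain ⟨h121, -⟩ := hc.shearFrame_one_two hD hA hB h120 hct x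
  obtain ⟨h020, -⟩ := hc.shearFrame_zero_two hD hA hB h120 hct x
  have hold := hcon.2 2 0 1 (Or.inr (Or.inr rfl)) x
  rw [hg0, hg1, hg2, hc.antisymm hD 2 1 1 x] at hold
  rw [hsum, hct.antisymm hE 2 0 0 x, hct.antisymm hE 2 1 1 x, h020, h121,
    hc.antisymm hD 0 2 0 x]
  have hu2 : u x - 2 ≠ 0 := sub_ne_zero.mpr (hu x).2
  have hu0 := (hupos x).ne'
  simp only [outG, tiltA, g34fn, Matrix.cons_val_zero, Matrix.cons_val_one,
    Matrix.cons_val_two, Matrix.head_cons, Matrix.tail_cons]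
  linear_combination (norm := (field_simp; ring1)) hold

theorem bklConstraints_of_normalForm (hD : IsFrame D) (hc : IsStructFns D c)
    (hcon : BKLConstraints D c g ξ) (hnf : IsNormalForm c g u) (x : R3) :
    (1 - u x ^ 2) / (2 * u x ^ 2) * dirD (D 0) u x + c 0 1 1 x * ((u x + 2) / 2)
        + c 0 2 2 x * ((2 * u x + 1) / (2 * u x)) - dirD (D 0) ξ x = 0 ∧
      dirD (D 1) u x / (2 * u x ^ 2) + c 1 2 2 x * ((1 - u x ^ 2) / (2 * u x))
        + c 0 1 0 x * ((u x + 2) / 2) + (1 + u x) * dirD (D 1) ξ x = 0 ∧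
      -dirD (D 2) u x / 2 - c 2 0 0 x * ((2 * u x + 1) / (2 * u x))
        - c 1 2 1 x * ((u x ^ 2 - 1) / (2 * u x)) + (u x + 1) / u x * dirD (D 2) ξ x = 0 := by
  obtain ⟨hus, hupos, hg0, hg1, hg2, -⟩ := hnf
  have hud := hus.differentiable (by simp) x
  have hu0 := (hupos x).ne'
  have h12 : (fun y => g 1 y + g 2 y) = fun y => -(1 / 2) * u y + -(1 / 2) / u y + -1 :=
    funext fun y => by rw [hg1, hg2]; ring
  have h20 : (fun y => g 2 y + g 0 y) = fun y => 0 * u y + -(1 / 2) / u y + 0 :=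
    funext fun y => by rw [hg2, hg0]; ring
  have h01 : (fun y => g 0 y + g 1 y) = fun y => -(1 / 2) * u y + 0 / u y + 0 :=
    funext fun y => by rw [hg0, hg1]; ring
  have hold0 := hcon.2 0 1 2 (Or.inl rfl) x
  have hold1 := hcon.2 1 2 0 (Or.inr (Or.inl rfl)) x
  have hold2 := hcon.2 2 0 1 (Or.inr (Or.inr rfl)) x
  rw [h12, dirD_affine_add_inv _ _ _ hud hu0, hg0, hg1, hg2] at hold0
  rw [h20, dirD_affine_add_inv _ _ _ hud hu0, hg0, hg1, hg2, hc.antisymm hD 1 0 0 x] at hold1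
  rw [h01, dirD_affine_add_inv _ _ _ hud hu0, hg0, hg1, hg2, hc.antisymm hD 2 1 1 x] at hold2
  refine ⟨?_, ?_, ?_⟩
  · linear_combination (norm := (field_simp; ring1)) hold0
  · linear_combination (norm := (field_simp; ring1)) hold1
  · linear_combination (norm := (field_simp; ring1)) hold2

theorem bklConstraints_out_zero (hD : IsFrame D) (hc : IsStructFns D c)
    (hξ : ContDiff ℝ (⊤ : ℕ∞) ξ) (hcon : BKLConstraints D c g ξ) (hnf : IsNormalForm c g u)
    (hu : ∀ x, u x ≠ 1 / 2 ∧ u x ≠ 2)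
    (hct : IsStructFns (shearFrame D (tiltA D c ξ u) (tiltB D c ξ u)) ct) (x : R3) :
    dirD (shearFrame D (tiltA D c ξ u) (tiltB D c ξ u) 0)
        (fun y => outG u 1 y + outG u 2 y) x
      + ct 0 1 1 x * (outG u 0 x - outG u 1 x) + ct 0 2 2 x * (outG u 0 x - outG u 2 x)
      - 2 * dirD (shearFrame D (tiltA D c ξ u) (tiltB D c ξ u) 0) ξ x * outG u 0 x = 0 := by
  obtain ⟨hold0, hold1, hold2⟩ := bklConstraints_of_normalForm hD hc hcon hnf x
  obtain ⟨hus, hupos, -, -, -, h120⟩ := hnf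
  have hA := contDiff_tiltA hD hc hξ hus fun x => (hu x).2
  have hB := contDiff_tiltB hD hc hξ hus fun x => (hu x).1
  have hud := hus.differentiable (by simp) x
  have hu0 := (hupos x).ne'
  have hnew : (fun y => outG u 1 y + outG u 2 y) = fun y => -(1 / 2) * u y + -(1 / 2) / u y + 1 :=
    funext fun y => show (1 - u y) / 2 + (1 - 1 / u y) / 2 = _ by ring
  obtain ⟨h010, h011⟩ := hc.shearFrame_zero_one hD hA hB h120 hct x
  obtain ⟨h020, h022⟩ := hc.shearFrame_zero_two hD hA hB h120 hct x
  have hdA := dirD_tiltA_mul hD hc hξ hus (fun x => (hu x).2) (D 1) x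
  have hdB := dirD_tiltB_mul hD hc hξ hus (fun x => (hu x).1) (D 2) x
  have hcomm := dirD_comm_of_normalForm hD hc hξ h120 x
  have hjac := jacobi_of_normalForm hD hc h120 x
  rw [hnew, dirD_shearFrame_zero, dirD_shearFrame_zero, dirD_affine_add_inv _ _ _ hud hu0,
    dirD_affine_add_inv _ _ _ hud hu0, dirD_affine_add_inv _ _ _ hud hu0, h011, h022, h010, h020, hc.antisymm hD 0 2 0 x]
  have hu2 : u x - 2 ≠ 0 := sub_ne_zero.mpr (hu x).2
  have h2u : 2 * u x - 1 ≠ 0 := fun h => (hu x).1 (by linarith)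
  -- `-1/2 • hdA` and `1/(2u) • hdB` absorb the goal's terms `(2 - u)/2 • D₂A` and
  -- `(2u - 1)/(2u) • D₃B`.
  linear_combination (norm := skip) hold0 + tiltA D c ξ u x * hold1 + tiltB D c ξ u x * hold2
    - (1 / 2) * hdA + 1 / (2 * u x) * hdB - hjac + hcomm
  simp only [outG, tiltA, tiltB, g34fn, g23fn, Matrix.cons_val_zero, Matrix.cons_val_one,
    Matrix.cons_val_two, Matrix.head_cons, Matrix.tail_cons]
  field_simp
  ring

theorem bklConstraints_out (hD : IsFrame D) (hc : IsStructFns D c)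
    (hξ : ContDiff ℝ (⊤ : ℕ∞) ξ) (hcon : BKLConstraints D c g ξ) (hnf : IsNormalForm c g u)
    (hu : ∀ x, u x ≠ 1 / 2 ∧ u x ≠ 2)
    (hct : IsStructFns (shearFrame D (tiltA D c ξ u) (tiltB D c ξ u)) ct) :
    BKLConstraints (shearFrame D (tiltA D c ξ u) (tiltB D c ξ u)) ct (outG u) ξ := by
  refine ⟨fun x => ?_, fun i j k hcyc x => ?_⟩
  · have hu0 := (hnf.2.1 x).ne'
    simp only [outG, Matrix.cons_val_zero, Matrix.cons_val_one, Matrix.cons_val_two,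
      Matrix.head_cons, Matrix.tail_cons]
    field_simp
    ring
  · rcases hcyc with h | h | h <;> simp only [Prod.mk.injEq] at h <;>
      obtain ⟨rfl, rfl, rfl⟩ := h
    exacts [bklConstraints_out_zero hD hc hξ hcon hnf hu hct x,
      bklConstraints_out_one hD hc hξ hcon hnf hu hct x,
      bklConstraints_out_two hD hc hξ hcon hnf hu hct x]

theorem smoothDatum_out (hξ : ContDiff ℝ (⊤ : ℕ∞) ξ) (hu : ContDiff ℝ (⊤ : ℕ∞) u)
    (hu0 : ∀ x, u x ≠ 0) : SmoothDatum (outG u) ξ := by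
  refine ⟨fun i => ?_, hξ⟩
  fin_cases i
  · exact contDiff_const
  · exact (contDiff_const.sub hu).div_const 2
  · exact (contDiff_const.sub (contDiff_const.div hu hu0)).div_const 2

end OutDatum

/-- the future-asymptotic datum of a normal-form datum again
satisfies the BKL constraints. -/
theorem bkl_out_datum
    (D : Fin 3 → R3 → R3) (c : Fin 3 → Fin 3 → Fin 3 → R3 → ℝ)
    (g : Fin 3 → R3 → ℝ) (ξ : R3 → ℝ)
    (hD : IsFrame D) (hc : IsStructFns D c) (hgξ : SmoothDatum g ξ)
    (hcon : BKLConstraints D c g ξ)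
    (u : R3 → ℝ) (hnf : IsNormalForm c g u)
    (hu : ∀ x : R3, u x ≠ 1 / 2 ∧ u x ≠ 2) :
    IsFrame ![tiltedD1 D c ξ u, D 1, D 2] ∧
    SmoothDatum ![fun _ : R3 => -(1 / 2 : ℝ), fun x : R3 => (1 - u x) / 2,
      fun x : R3 => (1 - 1 / u x) / 2] ξ ∧
    ∀ ctil : Fin 3 → Fin 3 → Fin 3 → R3 → ℝ,
      IsStructFns ![tiltedD1 D c ξ u, D 1, D 2] ctil →
      BKLConstraints ![tiltedD1 D c ξ u, D 1, D 2] ctil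
        ![fun _ : R3 => -(1 / 2 : ℝ), fun x : R3 => (1 - u x) / 2,
          fun x : R3 => (1 - 1 / u x) / 2] ξ := by
  have hA := contDiff_tiltA hD hc hgξ.2 hnf.1 fun x => (hu x).2
  have hB := contDiff_tiltB hD hc hgξ.2 hnf.1 fun x => (hu x).1
  rw [tilted_eq_shearFrame]
  exact ⟨isFrame_shearFrame hD hA hB, smoothDatum_out hgξ.2 hnf.1 fun x => (hnf.2.1 x).ne',
    fun ct hct => bklConstraints_out hD hc hgξ.2 hcon hnf hu hct⟩
end
end

section
/- Let D₁, D₂, D₃ : ℝ³ → ℝ³ be a frame with structure functions c_{jk}^p, and let g₁, g₂, g₃ : ℝ³ → ℝ be smooth functions satisfying D_j(g_k) − D_k(g_j) = Σ_{p=1}^3 c_{jk}^p g_p for all j, k ∈ {1,2,3}. Then there exists a smooth function ξ : ℝ³ → ℝ with g_i = D_i(ξ) for i = 1, 2, 3. -/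
noncomputable section

/-!
Since `D₁, D₂, D₃` is a frame, there is a unique `1`-form `θ` with `θ(D_i) = g_i`; it is smooth
because it is obtained by inverting the smoothly varying matrix of the frame. By the Leibniz rule,
`dθ(D_j, D_k) = D_j(g_k) − D_k(g_j) − θ([D_j, D_k])`, and `θ([D_j, D_k]) = Σ_p c_{jk}^p g_p`, so the
hypothesis says exactly that `θ` is closed. The Poincaré lemma on the convex set `ℝ³` then gives
`θ = dξ`, whence `D_i(ξ) = θ(D_i) = g_i`.
-/

open Module

theorem ContinuousLinearMap.flip_eq_self_of_basis {ι E F : Type*} [NormedAddCommGroup E]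
    [NormedSpace ℝ E] [NormedAddCommGroup F] [NormedSpace ℝ F] {T : E →L[ℝ] E →L[ℝ] F}
    (b : Basis ι ℝ E) (h : ∀ i j, T (b i) (b j) = T (b j) (b i)) : T.flip = T :=
  ContinuousLinearMap.coe_injective <| b.ext fun i =>
    ContinuousLinearMap.coe_injective <| b.ext fun j => (h i j).symm

section LinearCombination

variable {E F : Type*} [NormedAddCommGroup E] [NormedSpace ℝ E]
  [NormedAddCommGroup F] [NormedSpace ℝ F] {ι : Type*} [Fintype ι]

def linearCombinationCLM (v : ι → F) : (ι → ℝ) →L[ℝ] F :=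
  ∑ i, (ContinuousLinearMap.proj i).smulRight (v i)

theorem linearCombinationCLM_apply (v : ι → F) (a : ι → ℝ) :
    linearCombinationCLM v a = ∑ i, a i • v i := by
  simp [linearCombinationCLM]

theorem linearCombinationCLM_single [DecidableEq ι] (v : ι → F) (i : ι) :
    linearCombinationCLM v (Pi.single i 1) = v i := by
  simp [linearCombinationCLM_apply, Pi.single_apply]

theorem contDiff_linearCombinationCLM {n : WithTop ℕ∞} {v : ι → E → F}
    (hv : ∀ i, ContDiff ℝ n (v i)) :
    ContDiff ℝ n fun x => linearCombinationCLM fun i => v i x :=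
  ContDiff.sum fun i _ => contDiff_const.smulRight (hv i)

theorem isInvertible_linearCombinationCLM [FiniteDimensional ℝ E] {v : ι → E}
    (hli : LinearIndependent ℝ v) (hcard : Fintype.card ι = finrank ℝ E) :
    (linearCombinationCLM v).IsInvertible := by
  let b := basisOfLinearIndependentOfCardEqFinrank' v hli hcard
  refine ⟨b.equivFun.symm.toContinuousLinearEquiv, ContinuousLinearMap.ext fun a => ?_⟩
  simp [linearCombinationCLM_apply, b, Basis.equivFun_symm_apply]

theorem exists_contDiff_forall_apply_eq_of_linearIndependent [FiniteDimensional ℝ E]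
    {n : WithTop ℕ∞} {D : ι → E → E} {g : ι → E → F} (hD : ∀ i, ContDiff ℝ n (D i))
    (hg : ∀ i, ContDiff ℝ n (g i)) (hli : ∀ x, LinearIndependent ℝ fun i => D i x)
    (hcard : Fintype.card ι = finrank ℝ E) :
    ∃ θ : E → E →L[ℝ] F, ContDiff ℝ n θ ∧ ∀ i x, θ x (D i x) = g i x := by
  classical
  let M := fun x => linearCombinationCLM fun i => D i x
  have hM : ∀ x, (M x).IsInvertible := fun x => isInvertible_linearCombinationCLM (hli x) hcard
  refine ⟨fun x => (linearCombinationCLM fun i => g i x) ∘L (M x).inverse, ?_, fun i x => ?_⟩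
  · have hinv : ContDiff ℝ n fun x => (M x).inverse := contDiff_iff_contDiffAt.2 fun x =>
      (hM x).contDiffAt_map_inverse.comp x (contDiff_linearCombinationCLM hD).contDiffAt
    exact (contDiff_linearCombinationCLM hg).clm_comp hinv
  · have hDi : D i x = M x (Pi.single i 1) :=
      (linearCombinationCLM_single (fun j => D j x) i).symm
    rw [ContinuousLinearMap.comp_apply, hDi, (hM x).inverse_apply_self,
      linearCombinationCLM_single]

end LinearCombination

theorem exists_contDiff_fderiv_eq_of_fderiv_flip {E F : Type*} [NormedAddCommGroup E]
    [NormedSpace ℝ E] [NormedAddCommGroup F] [NormedSpace ℝ F] [CompleteSpace F]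
    {θ : E → E →L[ℝ] F} (hθ : ContDiff ℝ (⊤ : ℕ∞) θ)
    (hclosed : ∀ x, (fderiv ℝ θ x).flip = fderiv ℝ θ x) :
    ∃ ξ : E → F, ContDiff ℝ (⊤ : ℕ∞) ξ ∧ ∀ x, fderiv ℝ ξ x = θ x := by
  obtain ⟨ξ, hξ⟩ := convex_univ.exists_forall_hasFDerivAt_of_fderiv_symmetric isOpen_univ
    (hθ.differentiable (by simp)).differentiableOn
    fun x _ v w => (DFunLike.congr_fun (DFunLike.congr_fun (hclosed x) w) v)
  have hfd : fderiv ℝ ξ = θ := funext fun x => (hξ x trivial).fderiv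
  exact ⟨ξ, contDiff_infty_iff_fderiv.2 ⟨fun x => (hξ x trivial).differentiableAt, hfd ▸ hθ⟩,
    congrFun hfd⟩

theorem fderiv_flip_eq_of_frame_closed {D : Fin 3 → R3 → R3}
    {c : Fin 3 → Fin 3 → Fin 3 → R3 → ℝ} {g : Fin 3 → R3 → ℝ} {θ : R3 → R3 →L[ℝ] ℝ} {x : R3}
    (hθ : DifferentiableAt ℝ θ x) (hD : ∀ i, DifferentiableAt ℝ (D i) x)
    (hli : LinearIndependent ℝ fun i => D i x)
    (hstruct : ∀ j k, lieB (D j) (D k) x = ∑ i, c j k i x • D i x)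
    (hθD : ∀ k y, θ y (D k y) = g k y)
    (hclosed : ∀ j k : Fin 3,
      dirD (D j) (g k) x - dirD (D k) (g j) x = ∑ p, c j k p x * g p x) :
    (fderiv ℝ θ x).flip = fderiv ℝ θ x := by
  have leibniz : ∀ j k, fderiv ℝ θ x (D j x) (D k x)
      = dirD (D j) (g k) x - θ x (fderiv ℝ (D k) x (D j x)) := by
    intro j k
    have h := congrArg (· (D j x)) (fderiv_clm_apply hθ (hD k))
    simp only [funext (hθD k)] at h
    simp [dirD, h]
  have bracket : ∀ j k, θ x (lieB (D j) (D k) x) = ∑ p, c j k p x * g p x := by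
    intro j k
    simp [hstruct, hθD]
  refine ContinuousLinearMap.flip_eq_self_of_basis
    (basisOfLinearIndependentOfCardEqFinrank' _ hli (by simp)) fun j k => ?_
  simp only [coe_basisOfLinearIndependentOfCardEqFinrank']
  have := bracket j k
  rw [lieB, map_sub] at this
  linarith [leibniz j k, leibniz k j, hclosed j k]

/-- a frame-Poincaré lemma on `ℝ³`: if
`D_j(g_k) − D_k(g_j) = ∑_p c_(jk)^p g_p` then `g_i = D_i(ξ)` for some smooth `ξ`. -/
theorem frame_poincare_lemma
    (D : Fin 3 → R3 → R3) (c : Fin 3 → Fin 3 → Fin 3 → R3 → ℝ)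
    (hD : IsFrame D) (hc : IsStructFns D c)
    (g : Fin 3 → R3 → ℝ) (hg : ∀ i, ContDiff ℝ (⊤ : ℕ∞) (g i))
    (hclosed : ∀ j k : Fin 3, ∀ x : R3,
      dirD (D j) (g k) x - dirD (D k) (g j) x = ∑ p, c j k p x * g p x) :
    ∃ ξ : R3 → ℝ, ContDiff ℝ (⊤ : ℕ∞) ξ ∧ ∀ (i : Fin 3) (x : R3),
      g i x = dirD (D i) ξ x := by
  obtain ⟨hDsmooth, hli⟩ := hD
  obtain ⟨θ, hθ, hθD⟩ :=
    exists_contDiff_forall_apply_eq_of_linearIndependent hDsmooth hg hli (by simp)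
  obtain ⟨ξ, hξ, hdξ⟩ := exists_contDiff_fderiv_eq_of_fderiv_flip hθ fun x =>
    fderiv_flip_eq_of_frame_closed (hθ.differentiable (by simp) x)
      (fun i => (hDsmooth i).differentiable (by simp) x) (hli x) (hc.2 · · x) hθD
      (hclosed · · x)
  exact ⟨ξ, hξ, fun i x => by rw [dirD, hdξ, hθD]⟩
end
end
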